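/- arXiv:2105.02736 — 4 statements merged into one kernel-verified Lean document; each statement's English description precedes it below -/
import Mathlib

section
/- If the blob graph Blob(G) of a graph G contains an induced subgraph isomorphic to a path P_r on r vertices, then G itself contains an induced path on r vertices. -/
/-- The blob graph of `G`. -/
def Blob {V : Type*} (G : SimpleGraph V) :
    SimpleGraph {X : Set V // X.Nonempty ∧ (G.induce X).Connected} :=
  SimpleGraph.fromRel (fun A B =>
    ((A : Set V) ∩ (B : Set V)).Nonempty ∨
      ∃ x ∈ (A : Set V), ∃ y ∈ (B : Set V), G.Adj x y)

/-!
Let `B₀, …, Bₙ` be the blobs forming the induced path in `Blob G` and `W` their union. Blobs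
with non-consecutive indices neither meet nor are joined by an edge, so along an edge of `G[W]`
the blob index grows by at most one; hence every walk in `G[W]` from a vertex of `B₀` to a
different vertex of `Bₙ` has length at least `n`. A shortest such walk is a geodesic of `G[W]`,
and the vertices of a geodesic span an induced path; its first `n + 1` vertices give the
required induced `Pₙ₊₁` in `G`.
-/

theorem Set.exists_mem_mem_ne_of_ne {α : Type*} {s t : Set α} (hst : s ≠ t) (hs : s.Nonempty)
    (ht : t.Nonempty) : ∃ a ∈ s, ∃ b ∈ t, a ≠ b := by
  by_contra! h
  obtain ⟨a, ha⟩ := hs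
  obtain ⟨b, hb⟩ := ht
  exact hst (Set.ext fun x => ⟨fun hx => h x hx b hb ▸ hb, fun hx => h a ha x hx ▸ ha⟩)

namespace SimpleGraph

variable {V : Type*} {G : SimpleGraph V} {u v : V}

theorem Walk.dist_getVert_getVert_of_length_eq_dist {p : G.Walk u v}
    (hp : p.length = G.dist u v) {i j : ℕ} (hij : i ≤ j) (hj : j ≤ p.length) :
    G.dist (p.getVert i) (p.getVert j) = j - i := by
  have hsub : ((p.drop i).take (j - i)).IsSubwalk p :=
    (isSubwalk_take _ _).trans (isSubwalk_drop _ _)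
  have h := length_eq_dist_of_subwalk hp hsub
  rw [take_length, drop_length, drop_getVert, Nat.add_sub_cancel' hij] at h
  rw [← h]
  omega

theorem Reachable.nonempty_pathGraph_embedding (h : G.Reachable u v) {k : ℕ}
    (hk : k ≤ G.dist u v + 1) : Nonempty (pathGraph k ↪g G) := by
  obtain ⟨p, hp⟩ := h.exists_walk_length_eq_dist
  have hdist : ∀ i j : Fin k, i ≤ j →
      G.dist (p.getVert i) (p.getVert j) = (j : ℕ) - i := fun i j hij =>
    p.dist_getVert_getVert_of_length_eq_dist hp hij (by omega)
  have hinj : Function.Injective fun i : Fin k => p.getVert i := by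
    intro i j hij
    wlog hle : i ≤ j generalizing i j
    · exact (this hij.symm (le_of_not_ge hle)).symm
    have := hdist i j hle
    simp only [hij, dist_self] at this
    exact le_antisymm hle (by omega)
  refine ⟨⟨⟨fun i => p.getVert i, hinj⟩, fun {i j} => ?_⟩⟩
  change G.Adj (p.getVert i) (p.getVert j) ↔ (pathGraph k).Adj i j
  rw [pathGraph_adj]
  wlog hle : i ≤ j generalizing i j
  · rw [G.adj_comm, this (le_of_not_ge hle)]
    omega
  rw [← dist_eq_one_iff_adj, hdist i j hle]
  omega

theorem Preconnected.reachable_induce_of_subset {s W : Set V} (hs : (G.induce s).Preconnected)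
    (hsW : s ⊆ W) {x y : V} (hx : x ∈ s) (hy : y ∈ s) :
    (G.induce W).Reachable ⟨x, hsW hx⟩ ⟨y, hsW hy⟩ :=
  (hs ⟨x, hx⟩ ⟨y, hy⟩).map (induceHomOfLE G hsW).toHom

end SimpleGraph

namespace Blob

open SimpleGraph

variable {V : Type*} {G : SimpleGraph V}
  {A B : {X : Set V // X.Nonempty ∧ (G.induce X).Connected}}

theorem adj_of_adj (hAB : A ≠ B) {x y : V} (hx : x ∈ (A : Set V)) (hy : y ∈ (B : Set V)) (hxy : G.Adj x y) :
    (Blob G).Adj A B :=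
  (fromRel_adj _ _ _).2 ⟨hAB, .inl (.inr ⟨x, hx, y, hy, hxy⟩)⟩

theorem exists_eq_or_adj_of_adj (hAB : (Blob G).Adj A B) :
    ∃ x ∈ (A : Set V), ∃ y ∈ (B : Set V), x = y ∨ G.Adj x y := by
  obtain ⟨-, (⟨x, hxA, hxB⟩ | ⟨x, hx, y, hy, hxy⟩) | (⟨x, hxB, hxA⟩ | ⟨x, hx, y, hy, hxy⟩)⟩ :=
    (fromRel_adj _ _ _).1 hAB
  · exact ⟨x, hxA, x, hxB, .inl rfl⟩
  · exact ⟨x, hx, y, hy, .inr hxy⟩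
  · exact ⟨x, hxA, x, hxB, .inl rfl⟩
  · exact ⟨y, hy, x, hx, .inr hxy.symm⟩

theorem reachable_induce_of_walk {ι : Type*} {K : SimpleGraph ι} (φ : K →g Blob G) {W : Set V}
    (hW : ∀ k, (φ k : Set V) ⊆ W) {k k' : ι} (p : K.Walk k k') {x y : V}
    (hx : x ∈ (φ k : Set V)) (hy : y ∈ (φ k' : Set V)) :
    (G.induce W).Reachable ⟨x, hW k hx⟩ ⟨y, hW k' hy⟩ := by
  induction p generalizing x with
  | nil => exact (φ _).2.2.preconnected.reachable_induce_of_subset (hW _) hx hy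
  | cons hadj q ih =>
    obtain ⟨x', hx', y', hy', hxy'⟩ := exists_eq_or_adj_of_adj (φ.map_adj hadj)
    refine ((φ _).2.2.preconnected.reachable_induce_of_subset (hW _) hx hx').trans
      (Reachable.trans ?_ (ih hy' hy))
    rcases hxy' with rfl | hxy'
    · rfl
    · exact Adj.reachable (G := G.induce W) hxy'

section InducedPath

variable {m : ℕ} (e : pathGraph m ↪g Blob G)

theorem le_add_one_of_adj {i j : Fin m} {x y : V} (hx : x ∈ (e i : Set V))
    (hy : y ∈ (e j : Set V)) (hxy : G.Adj x y) : (j : ℕ) ≤ i + 1 := by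
  rcases eq_or_ne i j with rfl | hij
  · omega
  · have := e.map_rel_iff.1 (adj_of_adj (e.injective.ne hij) hx hy hxy)
    rw [pathGraph_adj] at this
    omega

/-- Stated for walks preceded by an edge: a lone vertex may lie in two consecutive blobs. -/
theorem le_add_one_add_length {x z y : ↥(⋃ i, (e i : Set V))} (hxz : G.Adj x z)
    (q : (G.induce (⋃ i, (e i : Set V))).Walk z y) {i j : Fin m} (hx : (x : V) ∈ (e i : Set V))
    (hy : (y : V) ∈ (e j : Set V)) : (j : ℕ) ≤ i + 1 + q.length := by
  induction q generalizing x i with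
  | nil => simpa using le_add_one_of_adj e hx hy hxz
  | @cons z w _ hzw q ih =>
    obtain ⟨k, hk⟩ := Set.mem_iUnion.1 z.2
    have hik := le_add_one_of_adj e hx hk hxz
    have hkj := ih hzw hk hy
    rw [Walk.length_cons]
    omega

theorem le_add_length_of_ne {x y : ↥(⋃ i, (e i : Set V))}
    (q : (G.induce (⋃ i, (e i : Set V))).Walk x y) (hxy : x ≠ y) {i j : Fin m}
    (hx : (x : V) ∈ (e i : Set V)) (hy : (y : V) ∈ (e j : Set V)) : (j : ℕ) ≤ i + q.length := by
  cases q with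
  | nil => exact absurd rfl hxy
  | cons hxz q =>
    have := le_add_one_add_length e hxz q hx hy
    rw [Walk.length_cons]
    omega

end InducedPath

theorem exists_mem_zero_mem_last_ne {n : ℕ} (e : pathGraph (n + 1) ↪g Blob G) :
    ∃ a ∈ (e 0 : Set V), ∃ b ∈ (e (Fin.last n) : Set V), a ≠ b ∨ n = 0 := by
  rcases Nat.eq_zero_or_pos n with rfl | hn
  · obtain ⟨a, ha⟩ := (e 0).2.1
    exact ⟨a, ha, a, ha, .inr rfl⟩
  · have h0 : (0 : Fin (n + 1)) ≠ Fin.last n := Fin.ne_of_val_ne (by simp; omega)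
    obtain ⟨a, ha, b, hb, hab⟩ := Set.exists_mem_mem_ne_of_ne
      (Subtype.coe_injective.ne (e.injective.ne h0)) (e 0).2.1 (e _).2.1
    exact ⟨a, ha, b, hb, .inl hab⟩

end Blob

theorem induced_path_of_blob_induced_path_general {V : Type*} (G : SimpleGraph V) (r : ℕ)
    (h : Nonempty (SimpleGraph.pathGraph r ↪g Blob G)) :
    Nonempty (SimpleGraph.pathGraph r ↪g G) := by
  obtain ⟨e⟩ := h
  cases r with
  | zero => exact ⟨RelEmbedding.ofIsEmpty _ _⟩
  | succ n =>
    obtain ⟨a, ha, b, hb, hab⟩ := Blob.exists_mem_zero_mem_last_ne e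
    have hreach := Blob.reachable_induce_of_walk e.toHom (Set.subset_iUnion _)
      ((SimpleGraph.pathGraph_connected n).preconnected 0 (Fin.last n)).some ha hb
    obtain ⟨p, hp⟩ := hreach.exists_walk_length_eq_dist
    have hn : n ≤ p.length := by
      rcases hab with hab | rfl
      · simpa using Blob.le_add_length_of_ne e p (fun h => hab (congrArg Subtype.val h)) ha hb
      · exact Nat.zero_le _
    obtain ⟨f⟩ := hreach.nonempty_pathGraph_embedding (hp ▸ Nat.succ_le_succ hn)
    exact ⟨(SimpleGraph.Embedding.induce _).comp f⟩

/-- If `Blob G` contains an induced path on `r` vertices, then so does `G`. -/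
theorem induced_path_of_blob_induced_path {V : Type*} [Fintype V] (G : SimpleGraph V) (r : ℕ)
    (h : Nonempty (SimpleGraph.pathGraph r ↪g Blob G)) :
    Nonempty (SimpleGraph.pathGraph r ↪g G) :=
  induced_path_of_blob_induced_path_general G r h
end

section
/- Let L be the line graph of a graph G, and let D be a connected induced subgraph of L that is an odd cactus (every block of D is an edge or an odd cycle) and contains a cycle C on at least 5 vertices. Then D has no vertices outside C, i.e., D equals the cycle C. -/
/-- `B` induces a biconnected subgraph of `G`. -/
def IsBiconnectedSet {V : Type*} (G : SimpleGraph V) (B : Set V) : Prop :=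
  2 ≤ B.ncard ∧ (G.induce B).Connected ∧ ∀ v ∈ B, (G.induce (B \ {v})).Preconnected

/-- A block of `G`: a maximal biconnected subgraph. -/
def IsBlock {V : Type*} (G : SimpleGraph V) (B : Set V) : Prop :=
  IsBiconnectedSet G B ∧ ∀ B', IsBiconnectedSet G B' → B ⊆ B' → B = B'

/-- An odd cactus: every block is an edge or an odd cycle. -/
def IsOddCactus {V : Type*} (G : SimpleGraph V) : Prop :=
  ∀ B : Set V, IsBlock G B →
    Nonempty ((G.induce B) ≃g (⊤ : SimpleGraph (Fin 2))) ∨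
      ∃ k : ℕ, 1 ≤ k ∧ Nonempty ((G.induce B) ≃g SimpleGraph.cycleGraph (2 * k + 1))

/-! The vertex set of the cycle is biconnected, so it lies in a block `B`, which by the cactus
hypothesis induces a cycle of length at least five. In a claw-free graph, such as a line graph,
no vertex `u` of such a block has a neighbour `y` outside it: `u` has two non-adjacent
neighbours in `B`, so by claw-freeness `y` is adjacent to one of them, and then `B ∪ {y}` is
still biconnected. Hence `B` is everything, and a cycle in a cycle graph visits every vertex. -/

open SimpleGraph

namespace SimpleGraph

variable {W : Type*} {H : SimpleGraph W}

def IsClawFree (H : SimpleGraph W) : Prop :=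
  ∀ ⦃u a b c : W⦄, H.Adj u a → H.Adj u b → H.Adj u c → a ≠ b → a ≠ c → b ≠ c →
    H.Adj a b ∨ H.Adj a c ∨ H.Adj b c

lemma IsClawFree.induce (hH : H.IsClawFree) (s : Set W) : (H.induce s).IsClawFree :=
  fun _ _ _ _ ha hb hc hab hac hbc =>
    hH ha hb hc (Subtype.coe_ne_coe.mpr hab) (Subtype.coe_ne_coe.mpr hac)
      (Subtype.coe_ne_coe.mpr hbc)

/-- The edges `a`, `b`, `c` each meet one of the two endpoints of `u`, so two of them share
an endpoint. -/
theorem isClawFree_lineGraph {V : Type*} (G : SimpleGraph V) : G.lineGraph.IsClawFree := by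
  intro u a b c ha hb hc hab hac hbc
  obtain ⟨-, wa, hwau, hwa⟩ := lineGraph_adj_iff_exists.mp ha
  obtain ⟨-, wb, hwbu, hwb⟩ := lineGraph_adj_iff_exists.mp hb
  obtain ⟨-, wc, hwcu, hwc⟩ := lineGraph_adj_iff_exists.mp hc
  obtain ⟨q, hq⟩ := Sym2.mem_iff_exists.mp hwau
  rw [hq, Sym2.mem_iff] at hwbu hwcu
  rcases hwbu with rfl | rfl
  · exact .inl (lineGraph_adj_iff_exists.mpr ⟨hab, _, hwa, hwb⟩)
  rcases hwcu with rfl | rfl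
  · exact .inr (.inl (lineGraph_adj_iff_exists.mpr ⟨hac, _, hwa, hwc⟩))
  · exact .inr (.inr (lineGraph_adj_iff_exists.mpr ⟨hbc, _, hwb, hwc⟩))

lemma cycleGraph_eq_or_eq_or_eq_of_adj {m : ℕ} {x a b c : Fin (m + 2)}
    (ha : (cycleGraph (m + 2)).Adj x a) (hb : (cycleGraph (m + 2)).Adj x b)
    (hc : (cycleGraph (m + 2)).Adj x c) : a = b ∨ a = c ∨ b = c := by
  have key : ∀ z, (cycleGraph (m + 2)).Adj x z → z = x - 1 ∨ z = x + 1 := fun z hz => by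
    simpa [cycleGraph_neighborSet] using (show z ∈ (cycleGraph (m + 2)).neighborSet x from hz)
  rcases key a ha with rfl | rfl <;> rcases key b hb with rfl | rfl <;>
    rcases key c hc with rfl | rfl <;> simp

open Fin.CommRing in
lemma cycleGraph_exists_adj_adj_not_adj {n : ℕ} (x : Fin (n + 4)) :
    ∃ a b, (cycleGraph (n + 4)).Adj x a ∧ (cycleGraph (n + 4)).Adj x b ∧ a ≠ b ∧
      ¬ (cycleGraph (n + 4)).Adj a b := by
  have h2 : (2 : Fin (n + 4)) ≠ 0 := by
    simp [Fin.ext_iff, Nat.mod_eq_of_lt (show 2 < n + 4 by omega)]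
  have h3 : (3 : Fin (n + 4)) ≠ 0 := by
    simp [Fin.ext_iff, Nat.mod_eq_of_lt (show 3 < n + 4 by omega)]
  refine ⟨x + 1, x - 1, by simp [cycleGraph_adj], by simp [cycleGraph_adj], ?_, ?_⟩
  · intro h
    exact h2 (by linear_combination h)
  · rw [cycleGraph_adj]
    rintro (h | h)
    · exact one_ne_zero (by linear_combination h : (1 : Fin (n + 4)) = 0)
    · exact h3 (by linear_combination -h)

lemma preconnected_induce_insert {s : Set W} {m y : W} (hs : (H.induce s).Preconnected)
    (hm : m ∈ s) (hmy : H.Adj m y) : (H.induce (insert y s)).Preconnected := by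
  rw [← Set.union_singleton]
  exact (connected_induce_union hs Preconnected.of_subsingleton hm (Set.mem_singleton y)
    hmy).preconnected

namespace Walk.IsCycle

variable {v u : W} {c : H.Walk v v}

lemma exists_adj_adj_ne (hc : c.IsCycle) (hu : u ∈ c.support) :
    ∃ a b, a ∈ c.support ∧ b ∈ c.support ∧ a ≠ b ∧ H.Adj u a ∧ H.Adj u b := by
  classical
  have hd := hc.rotate hu
  exact ⟨_, _, (c.mem_support_rotate_iff u hu).mp (getVert_mem_support _ 1),
    (c.mem_support_rotate_iff u hu).mp (getVert_mem_support _ _), hd.snd_ne_penultimate,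
    adj_snd hd.not_nil, (adj_penultimate hd.not_nil).symm⟩

lemma ncard_support (hc : c.IsCycle) : {z | z ∈ c.support}.ncard = c.length := by
  classical
  have hset : {z | z ∈ c.support} = ↑c.support.tail.toFinset := by
    ext z
    rw [Set.mem_ofPred_eq, Finset.mem_coe, List.mem_toFinset, ← c.cons_tail_support,
      List.tail_cons, List.mem_cons, or_iff_right_iff_imp]
    rintro rfl
    exact end_mem_tail_support hc.not_nil
  rw [hset, Set.ncard_coe_finset, List.toFinset_card_of_nodup hc.support_nodup,
    List.length_tail, length_support, Nat.add_sub_cancel]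

lemma mem_support_of_iso_cycleGraph {m : ℕ} (f : H ≃g cycleGraph (m + 2)) (hc : c.IsCycle)
    (x : W) : x ∈ c.support := by
  by_contra hx
  obtain ⟨p⟩ := cycleGraph_preconnected.map f.symm.toHom f.symm.surjective v x
  obtain ⟨d, -, hd, hdx⟩ := p.exists_boundary_dart {z | z ∈ c.support} c.start_mem_support hx
  obtain ⟨a, b, ha, hb, hab, hda, hdb⟩ := hc.exists_adj_adj_ne hd
  rcases cycleGraph_eq_or_eq_or_eq_of_adj (f.map_adj_iff.mpr hda) (f.map_adj_iff.mpr hdb)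
    (f.map_adj_iff.mpr d.adj) with h | h | h <;> rw [f.injective.eq_iff] at h
  · exact hab h
  · exact hdx (h ▸ ha)
  · exact hdx (h ▸ hb)

end Walk.IsCycle

lemma Preconnected.eq_univ_of_adj_mem (hH : H.Preconnected) {s : Set W} {a : W} (ha : a ∈ s)
    (hs : ∀ ⦃u y⦄, u ∈ s → H.Adj u y → y ∈ s) : s = Set.univ :=
  Set.eq_univ_of_forall fun x => by
    by_contra hx
    obtain ⟨d, -, hd, hdx⟩ := (hH a x).some.exists_boundary_dart s ha hx
    exact hdx (hs hd d.adj)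

end SimpleGraph

section Blocks

variable {W : Type*} {H : SimpleGraph W}

lemma SimpleGraph.Walk.IsCycle.isBiconnectedSet_support {v : W} {c : H.Walk v v}
    (hc : c.IsCycle) : IsBiconnectedSet H {z | z ∈ c.support} := by
  classical
  refine ⟨by linarith [hc.ncard_support, hc.three_le_length], c.connected_induce_support,
    fun u hu => ?_⟩
  -- rotated to start at `u`, the cycle minus `u` is its tail with the last vertex dropped
  set d := c.rotate u hu
  have hd : d.IsCycle := hc.rotate hu
  have hnil : ¬ d.tail.Nil := by
    have := hd.three_le_length
    rw [Walk.not_nil_iff_lt_length, Walk.length_tail]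
    omega
  have hsupp : d.tail.support = d.tail.dropLast.support ++ [u] :=
    (Walk.support_dropLast_concat hnil).symm
  have hu' : u ∉ d.tail.dropLast.support := by
    have := hd.isPath_tail.support_nodup
    rw [hsupp, List.nodup_append] at this
    exact fun h => this.2.2 u h u (List.mem_singleton_self u) rfl
  have hdsupp : d.support = u :: (d.tail.dropLast.support ++ [u]) := by
    rw [← hsupp, Walk.support_tail_of_not_nil _ hd.not_nil, Walk.cons_tail_support]
  have hset : {z | z ∈ c.support} \ {u} = {z | z ∈ d.tail.dropLast.support} := by
    ext z
    rw [Set.mem_sdiff, Set.mem_ofPred_eq, Set.mem_ofPred_eq, Set.mem_singleton_iff,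
      ← c.mem_support_rotate_iff u hu, hdsupp]
    simp only [List.mem_cons, List.mem_append, List.not_mem_nil, or_false]
    constructor
    · rintro ⟨h | h | h, hzu⟩
      exacts [absurd h hzu, h, absurd h hzu]
    · exact fun h => ⟨.inr (.inl h), fun hzu => hu' (hzu ▸ h)⟩
  rw [hset]
  exact d.tail.dropLast.connected_induce_support.preconnected

lemma IsBiconnectedSet.insert_of_adj {B : Set W} (hB : IsBiconnectedSet H B) {y u n : W}
    (hy : y ∉ B) (hu : u ∈ B) (hn : n ∈ B) (hun : u ≠ n) (huy : H.Adj u y) (hny : H.Adj n y) :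
    IsBiconnectedSet H (insert y B) := by
  obtain ⟨hcard, hconn, hdel⟩ := hB
  have hfin : (insert y B).Finite := (Set.finite_of_ncard_pos (by omega)).insert y
  refine ⟨hcard.trans (Set.ncard_le_ncard (Set.subset_insert y B) hfin),
    (connected_iff _).mpr ⟨preconnected_induce_insert hconn.preconnected hu huy,
      ⟨⟨y, Set.mem_insert y B⟩⟩⟩, fun v hv => ?_⟩
  rcases hv with rfl | hv
  · rw [Set.insert_sdiff_self_of_notMem hy]
    exact hconn.preconnected
  rw [Set.insert_sdiff_of_notMem B (fun h : y ∈ ({v} : Set W) => hy (h ▸ hv))]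
  by_cases huv : u = v
  · exact preconnected_induce_insert (hdel v hv) ⟨hn, fun h => hun (huv.trans h.symm)⟩ hny
  · exact preconnected_induce_insert (hdel v hv) ⟨hu, huv⟩ huy

lemma IsBlock.mem_of_adj_of_adj {B : Set W} (hB : IsBlock H B) {y u n : W} (hu : u ∈ B)
    (hn : n ∈ B) (hun : u ≠ n) (huy : H.Adj u y) (hny : H.Adj n y) : y ∈ B := by
  by_contra hy
  rw [hB.2 _ (hB.1.insert_of_adj hy hu hn hun huy hny) (Set.subset_insert y B)] at hy
  exact hy (Set.mem_insert y B)

lemma exists_isBlock_superset [Finite W] {S : Set W} (hS : IsBiconnectedSet H S) :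
    ∃ B, IsBlock H B ∧ S ⊆ B := by
  obtain ⟨B, hSB, hB⟩ := Finite.exists_le_maximal (p := IsBiconnectedSet H) hS
  exact ⟨B, ⟨hB.prop, fun B' hB' hBB' => hBB'.antisymm (hB.2 hB' hBB')⟩, hSB⟩

lemma IsOddCactus.exists_iso_cycleGraph (hH : IsOddCactus H) {B : Set W} (hB : IsBlock H B)
    (h4 : 4 ≤ B.ncard) : ∃ n, 4 ≤ n ∧ Nonempty (H.induce B ≃g cycleGraph n) := by
  have hcard {m : ℕ} {K : SimpleGraph (Fin m)} (f : H.induce B ≃g K) : B.ncard = m := by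
    rw [← Nat.card_coe_set_eq, Nat.card_congr f.toEquiv, Nat.card_eq_fintype_card,
      Fintype.card_fin]
  rcases hH B hB with ⟨⟨f⟩⟩ | ⟨k, -, ⟨f⟩⟩
  · have := hcard f
    omega
  · exact ⟨2 * k + 1, by have := hcard f; omega, ⟨f⟩⟩

lemma SimpleGraph.IsClawFree.mem_of_adj_of_isBlock (hH : H.IsClawFree) {B : Set W}
    (hB : IsBlock H B) {n : ℕ} (f : H.induce B ≃g cycleGraph (n + 4)) {u y : W} (hu : u ∈ B)
    (huy : H.Adj u y) : y ∈ B := by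
  by_contra hy
  obtain ⟨a, b, ha, hb, hab, hnab⟩ := cycleGraph_exists_adj_adj_not_adj (f ⟨u, hu⟩)
  have hua : H.Adj u (f.symm a) := by simpa using f.symm.map_adj_iff.mpr ha
  have hub : H.Adj u (f.symm b) := by simpa using f.symm.map_adj_iff.mpr hb
  have hne (z : B) : (z : W) ≠ y := fun h => hy (h ▸ z.2)
  rcases hH hua hub huy (Subtype.coe_injective.ne (f.symm.injective.ne hab)) (hne _) (hne _)
    with h | h | h
  · exact hnab (f.symm.map_adj_iff.mp h)
  · exact hy (hB.mem_of_adj_of_adj hu (f.symm a).2 hua.ne huy h)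
  · exact hy (hB.mem_of_adj_of_adj hu (f.symm b).2 hub.ne huy h)

end Blocks

/-- A connected induced odd-cactus subgraph of a line graph containing a cycle on
at least 5 vertices has no vertices outside that cycle. -/
theorem oddCactus_in_lineGraph_eq_long_cycle {V : Type*} [Fintype V] (G : SimpleGraph V)
    (D : Set G.edgeSet)
    (hconn : ((G.lineGraph).induce D).Connected)
    (hcactus : IsOddCactus ((G.lineGraph).induce D))
    (v : D) (c : ((G.lineGraph).induce D).Walk v v)
    (hc : c.IsCycle) (hlen : 5 ≤ c.length) :
    ∀ x : D, x ∈ c.support := by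
  obtain ⟨B, hB, hcB⟩ := exists_isBlock_superset hc.isBiconnectedSet_support
  obtain ⟨n, hn, ⟨f⟩⟩ := hcactus.exists_iso_cycleGraph hB
    (by linarith [hc.ncard_support, Set.ncard_le_ncard hcB])
  obtain ⟨m, rfl⟩ := Nat.exists_eq_add_of_le' hn
  obtain rfl : B = Set.univ := hconn.preconnected.eq_univ_of_adj_mem (hcB c.start_mem_support)
    fun _ _ hu huy => ((isClawFree_lineGraph G).induce D).mem_of_adj_of_isBlock hB f hu huy
  exact hc.mem_support_of_iso_cycleGraph ((induceUnivIso _).symm.trans f)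
end

section
/- Subdividing every edge of a graph G exactly 2p times (for p ≥ 1) yields a graph G′ whose minimum even cycle transversal has the same size as the minimum even cycle transversal of G, and G′ has girth greater than p (provided G has a cycle). -/
/-- Auxiliary relation describing the graph obtained from `G` by subdividing
every edge exactly `t` times: each edge `uv` (oriented from its smaller to its
larger endpoint) is replaced by the path `u, (e,0), (e,1), …, (e,t-1), v`. -/
def SubdivRel {V : Type*} [LinearOrder V] (G : SimpleGraph V) (t : ℕ) :
    (V ⊕ G.edgeSet × Fin t) → (V ⊕ G.edgeSet × Fin t) → Prop
  | Sum.inl u, Sum.inr (e, i) =>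
      (i.val = 0 ∧ u = Sym2.inf (e : Sym2 V)) ∨ (i.val = t - 1 ∧ u = Sym2.sup (e : Sym2 V))
  | Sum.inr (e, i), Sum.inr (f, j) => e = f ∧ i.val + 1 = j.val
  | _, _ => False

/-- The graph obtained from `G` by subdividing every edge exactly `t` times. -/
def Subdivision {V : Type*} [LinearOrder V] (G : SimpleGraph V) (t : ℕ) :
    SimpleGraph (V ⊕ G.edgeSet × Fin t) :=
  SimpleGraph.fromRel (SubdivRel G t)

/-- `S` is an even cycle transversal of `H`: it meets every even cycle. -/
def IsEvenCycleTransversal {W : Type*} (H : SimpleGraph W) (S : Set W) : Prop :=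
  ∀ (v : W) (w : H.Walk v v), w.IsCycle → Even w.length → ∃ x ∈ S, x ∈ w.support

/-!
Replacing every edge of `G` by a path of length `t + 1` lifts each walk of `G` to a walk of the
subdivision `G'`, multiplying its length by `t + 1` and sending cycles to cycles. Conversely, the
subdivision vertices have degree two and every cycle of `G'` passes through an original vertex,
so every cycle of `G'` is the lift of a cycle of `G`. For `t = 2p` the factor `2p + 1` is odd, so
even cycles correspond to even cycles: an even cycle transversal `S` of `G` is one of `G'`, and one
of `G'` collapses (sending a subdivision vertex to an endpoint of its edge) onto a transversal of
`G` that is no larger. The girth of `G'` is at least `3(2p + 1) > p`.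
-/

lemma Sym2.mk_inf_sup {α : Type*} [LinearOrder α] (s : Sym2 α) : s(s.inf, s.sup) = s :=
  Sym2.sortEquiv.symm_apply_apply s

namespace SimpleGraph

variable {W : Type*} {H : SimpleGraph W}

lemma Walk.isCycle_iff_nodup_support_tail {x : W} {p : H.Walk x x} :
    p.IsCycle ↔ p.support.tail.Nodup ∧ 3 ≤ p.length := by
  refine ⟨fun hp => ⟨hp.support_nodup, hp.three_le_length⟩, fun ⟨hs, hl⟩ => ?_⟩
  have hnil : ¬ p.Nil := by rw [Walk.not_nil_iff_lt_length]; omega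
  rw [Walk.isCycle_iff_isPath_tail_and_le_length, Walk.isPath_def,
    Walk.support_tail_of_not_nil _ hnil]
  exact ⟨hs, hl⟩

variable {f : ℕ → W} {n : ℕ} {b : W}

def walkAlong (hf : ∀ k < n, H.Adj (f k) (f (k + 1))) (hb : f n = b) (i : ℕ) (hi : i ≤ n) :
    H.Walk (f i) b :=
  if h : i < n then .cons (hf i h) (walkAlong hf hb (i + 1) h)
  else Walk.nil.copy rfl (by rw [show i = n by omega, hb])
termination_by n - i

variable (hf : ∀ k < n, H.Adj (f k) (f (k + 1))) (hb : f n = b)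

lemma walkAlong_of_lt {i : ℕ} (h : i < n) :
    walkAlong hf hb i h.le = .cons (hf i h) (walkAlong hf hb (i + 1) h) := by
  rw [walkAlong, dif_pos h]

lemma support_walkAlong (i : ℕ) (hi : i ≤ n) :
    (walkAlong hf hb i hi).support = (List.range' i (n - i + 1)).map f := by
  rw [walkAlong]
  split_ifs with h
  · rw [Walk.support_cons, support_walkAlong (i + 1) h,
      show n - i + 1 = n - (i + 1) + 1 + 1 by omega, List.range'_succ (s := i), List.map_cons]
  · obtain rfl : i = n := by omega
    simp
termination_by n - i

lemma length_walkAlong (i : ℕ) (hi : i ≤ n) : (walkAlong hf hb i hi).length = n - i := by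
  have := congrArg List.length (support_walkAlong hf hb i hi)
  simp only [Walk.length_support, List.length_map, List.length_range'] at this
  omega

/-- A path that enters the sequence at `f i` without stepping back to `f (i - 1)` must follow it
up to `f n`, because each interior vertex `f k` has no neighbours besides `f (k ± 1)`. -/
theorem exists_eq_walkAlong_append
    (hdeg : ∀ k, 0 < k → k < n → ∀ y, H.Adj (f k) y → y = f (k - 1) ∨ y = f (k + 1))
    {z : W} (hz : ∀ k, 0 < k → k < n → f k ≠ z) (i : ℕ) (hi0 : 0 < i) (hi : i ≤ n)
    (w : H.Walk (f i) z) (hw : w.IsPath) (hsnd : w.snd ≠ f (i - 1)) :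
    ∃ w' : H.Walk b z, w = (walkAlong hf hb i hi).append w' := by
  by_cases hin : i < n
  · cases w with
    | nil => exact absurd rfl (hz i hi0 hin)
    | cons hadj w₁ =>
      rename_i y
      obtain rfl : y = f (i + 1) := (hdeg i hi0 hin y hadj).resolve_left (by simpa using hsnd)
      have hw₁ := Walk.cons_isPath_iff _ _ |>.mp hw
      obtain ⟨w', rfl⟩ := exists_eq_walkAlong_append hdeg hz (i + 1) (by omega) hin w₁ hw₁.1
        fun h => hw₁.2 (by simpa [h] using w₁.getVert_mem_support 1)
      exact ⟨w', by rw [walkAlong_of_lt hf hb hin, Walk.cons_append]⟩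
  · obtain rfl : i = n := by omega
    subst hb
    exact ⟨w, by rw [walkAlong, dif_neg hin]; rfl⟩
termination_by n - i

end SimpleGraph

lemma isEvenCycleTransversal_univ {W : Type*} (H : SimpleGraph W) :
    IsEvenCycleTransversal H Set.univ :=
  fun v _ _ _ => ⟨v, trivial, SimpleGraph.Walk.start_mem_support _⟩

lemma sInf_ncard_le_of_image {α β : Type*} [Finite β] {P : Set α → Prop} {Q : Set β → Prop}
    (f : β → α) (hQ : ∃ S, Q S) (hf : ∀ S, Q S → P (f '' S)) :
    sInf {k | ∃ S, P S ∧ S.ncard = k} ≤ sInf {k | ∃ S, Q S ∧ S.ncard = k} := by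
  obtain ⟨S, hS⟩ := hQ
  obtain ⟨S, hS, hcard⟩ := Nat.sInf_mem (s := {k | ∃ S, Q S ∧ S.ncard = k}) ⟨_, S, hS, rfl⟩
  calc sInf {k | ∃ S, P S ∧ S.ncard = k} ≤ (f '' S).ncard := Nat.sInf_le ⟨_, hf S hS, rfl⟩
    _ ≤ S.ncard := Set.ncard_image_le S.toFinite
    _ = _ := hcard

namespace Subdivision

open SimpleGraph Sum

variable {V : Type*} [LinearOrder V] {G : SimpleGraph V} {t : ℕ}

lemma not_adj_inl_inl {u v : V} : ¬ (Subdivision G t).Adj (inl u) (inl v) := by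
  simp [Subdivision, SubdivRel]

lemma adj_inl_inr {u : V} {e : G.edgeSet} {i : Fin t} :
    (Subdivision G t).Adj (inl u) (inr (e, i)) ↔
      (i.val = 0 ∧ u = Sym2.inf (e : Sym2 V)) ∨ (i.val = t - 1 ∧ u = Sym2.sup (e : Sym2 V)) := by
  simp [Subdivision, SubdivRel]

lemma adj_inr_inl {u : V} {e : G.edgeSet} {i : Fin t} :
    (Subdivision G t).Adj (inr (e, i)) (inl u) ↔
      (i.val = 0 ∧ u = Sym2.inf (e : Sym2 V)) ∨ (i.val = t - 1 ∧ u = Sym2.sup (e : Sym2 V)) := by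
  rw [adj_comm, adj_inl_inr]

lemma adj_inr_inr {e f : G.edgeSet} {i j : Fin t} :
    (Subdivision G t).Adj (inr (e, i)) (inr (f, j)) ↔
      e = f ∧ (i.val + 1 = j.val ∨ j.val + 1 = i.val) := by
  simp only [Subdivision, SubdivRel, fromRel_adj, ne_eq, inr.injEq, Prod.mk.injEq]
  grind

/-- On a cycle avoiding the original vertices, both cycle neighbours of a vertex of maximal index
would be the vertex just below it. -/
lemma exists_inl_mem_support {x : V ⊕ G.edgeSet × Fin t} {c : (Subdivision G t).Walk x x}
    (hc : c.IsCycle) : ∃ a, inl a ∈ c.support := by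
  classical
  by_contra! hno
  obtain ⟨m, hm, hmax⟩ := c.support.toFinset.exists_max_image
    (Sum.elim (fun _ => 0) fun p => p.2.val) ⟨x, List.mem_toFinset.mpr c.start_mem_support⟩
  rw [List.mem_toFinset] at hm
  rcases m with a | ⟨e, j⟩
  · exact hno a hm
  have hc' := hc.rotate hm
  have below : ∀ y ∈ (c.rotate _ hm).support, (Subdivision G t).Adj (inr (e, j)) y →
      ∃ i : Fin t, i.val + 1 = j.val ∧ y = inr (e, i) := by
    intro y hy hadj
    rw [Walk.mem_support_rotate_iff] at hy
    rcases y with a | ⟨f, i⟩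
    · exact (hno a hy).elim
    have hij : i.val ≤ j.val := by simpa using hmax _ (List.mem_toFinset.mpr hy)
    obtain ⟨rfl, h | h⟩ := adj_inr_inr.mp hadj
    · omega
    · exact ⟨i, h, rfl⟩
  obtain ⟨i, hi, hsnd⟩ := below _ (Walk.getVert_mem_support _ _) (Walk.adj_snd hc'.not_nil)
  obtain ⟨i', hi', hpen⟩ :=
    below _ (Walk.getVert_mem_support _ _) (Walk.adj_penultimate hc'.not_nil).symm
  obtain rfl : i = i' := Fin.ext (by omega)
  exact hc'.snd_ne_penultimate (hsnd.trans hpen.symm)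

variable {u v : V}

/-- The `k`-th vertex (`0 ≤ k ≤ t + 1`) of the path replacing the edge `uv`, traversed from `u` to
`v`; the subdivision vertices of an edge are numbered from its smaller endpoint, hence `Fin.rev`. -/
def chainVert (h : G.Adj u v) : ℕ → V ⊕ G.edgeSet × Fin t
  | 0 => inl u
  | k + 1 =>
    if hk : k < t then inr (⟨s(u, v), h⟩, if u < v then ⟨k, hk⟩ else Fin.rev ⟨k, hk⟩) else inl v

lemma chainVert_succ (h : G.Adj u v) {k : ℕ} (hk : k < t) :
    chainVert h (k + 1) = inr (⟨s(u, v), h⟩, if u < v then ⟨k, hk⟩ else Fin.rev ⟨k, hk⟩) := by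
  simp [chainVert, hk]

lemma chainVert_last (h : G.Adj u v) : chainVert (t := t) h (t + 1) = inl v := by
  simp [chainVert]

lemma chainVert_ne_inl (h : G.Adj u v) {k : ℕ} (hk0 : 0 < k) (hk : k ≤ t) (a : V) :
    chainVert (t := t) h k ≠ inl a := by
  obtain ⟨k, rfl⟩ : ∃ k', k = k' + 1 := ⟨k - 1, by omega⟩
  simp [chainVert_succ h hk]

lemma chainVert_injOn (h : G.Adj u v) :
    Set.InjOn (chainVert (t := t) h) (Set.Icc 1 (t + 1)) := by
  rintro (_ | a) ⟨ha, ha'⟩ (_ | b) ⟨hb, hb'⟩ hab <;> try omega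
  simp only [chainVert] at hab
  split_ifs at hab <;> simp_all [Fin.ext_iff, Fin.val_rev] <;> omega

lemma chainVert_eq_of_adj (h : G.Adj u v) {k : ℕ} (hk0 : 0 < k) (hk : k < t + 1)
    {y : V ⊕ G.edgeSet × Fin t} (hy : (Subdivision G t).Adj (chainVert h k) y) :
    y = chainVert h (k - 1) ∨ y = chainVert h (k + 1) := by
  obtain ⟨k, rfl⟩ : ∃ k', k = k' + 1 := ⟨k - 1, by omega⟩
  rcases lt_or_gt_of_ne h.ne with huv | huv
  · rcases y with w | ⟨f, j⟩ <;> rcases k with _ | k <;>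
      simp only [chainVert, if_pos huv] at hy ⊢ <;> split_ifs at hy ⊢ <;>
      simp_all [adj_inr_inl, adj_inr_inr, huv.le] <;> grind
  · rcases y with w | ⟨f, j⟩ <;> rcases k with _ | k <;>
      simp only [chainVert, if_neg (not_lt.mpr huv.le)] at hy ⊢ <;> split_ifs at hy ⊢ <;>
      simp_all [adj_inr_inl, adj_inr_inr, huv.le, Fin.val_rev] <;> grind

def proj : V ⊕ G.edgeSet × Fin t → V :=
  Sum.elim id fun x => Sym2.inf (x.1 : Sym2 V)

variable [NeZero t]

lemma adj_chainVert (h : G.Adj u v) :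
    ∀ k < t + 1, (Subdivision G t).Adj (chainVert h k) (chainVert h (k + 1)) := by
  intro k hk
  have ht := NeZero.pos t
  rcases lt_or_gt_of_ne h.ne with huv | huv
  · rcases k with _ | k <;> simp only [chainVert, if_pos huv] <;> split_ifs <;>
      simp [adj_inl_inr, adj_inr_inl, adj_inr_inr, huv.le] <;> omega
  · rcases k with _ | k <;> simp only [chainVert, if_neg (not_lt.mpr huv.le)] <;> split_ifs <;>
      simp [adj_inl_inr, adj_inr_inl, adj_inr_inr, Fin.val_rev, huv.le] <;> omega

lemma exists_chainVert_one_eq {y : V ⊕ G.edgeSet × Fin t}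
    (hy : (Subdivision G t).Adj (inl u) y) : ∃ v, ∃ h : G.Adj u v, chainVert h 1 = y := by
  rcases y with w | ⟨e, i⟩
  · exact absurd hy not_adj_inl_inl
  have he : G.Adj (Sym2.inf (e : Sym2 V)) (Sym2.sup (e : Sym2 V)) := by
    rw [← mem_edgeSet, Sym2.mk_inf_sup]
    exact e.2
  have hlt := lt_of_le_of_ne (Sym2.inf_le_sup _) he.ne
  rw [adj_inl_inr] at hy
  rcases hy with ⟨hi, rfl⟩ | ⟨hi, rfl⟩
  · refine ⟨_, he, ?_⟩
    rw [chainVert_succ he (NeZero.pos t)]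
    simp [hlt, Sym2.mk_inf_sup, Fin.ext_iff, hi]
  · refine ⟨_, he.symm, ?_⟩
    rw [chainVert_succ he.symm (NeZero.pos t)]
    simp [not_lt.mpr hlt.le, Sym2.eq_swap, Sym2.mk_inf_sup, Fin.ext_iff, hi]

def edgeWalk (h : G.Adj u v) : (Subdivision G t).Walk (inl u) (inl v) :=
  walkAlong (adj_chainVert h) (chainVert_last h) 0 (Nat.zero_le _)

lemma length_edgeWalk (h : G.Adj u v) : (edgeWalk (t := t) h).length = t + 1 :=
  length_walkAlong ..

lemma support_tail_edgeWalk (h : G.Adj u v) :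
    (edgeWalk (t := t) h).support.tail = (List.range' 1 (t + 1)).map (chainVert h) := by
  have := support_walkAlong (adj_chainVert (t := t) h) (chainVert_last h) 0 (Nat.zero_le _)
  rw [Nat.sub_zero, List.range'_succ] at this
  exact congrArg List.tail this

lemma nodup_support_tail_edgeWalk (h : G.Adj u v) :
    (edgeWalk (t := t) h).support.tail.Nodup := by
  rw [support_tail_edgeWalk]
  refine List.Nodup.map_on (fun a ha b hb hab => chainVert_injOn h ?_ ?_ hab) List.nodup_range'
  all_goals simp_all [List.mem_range'_1]; omega

lemma mem_support_tail_edgeWalk (h : G.Adj u v) {x : V ⊕ G.edgeSet × Fin t} :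
    x ∈ (edgeWalk h).support.tail ↔ x = inl v ∨ ∃ i, x = inr (⟨s(u, v), h⟩, i) := by
  simp only [support_tail_edgeWalk, List.mem_map, List.mem_range'_1]
  constructor
  · rintro ⟨k, ⟨hk1, hk2⟩, rfl⟩
    obtain ⟨k, rfl⟩ : ∃ k', k = k' + 1 := ⟨k - 1, by omega⟩
    by_cases hk : k < t
    · exact Or.inr ⟨_, chainVert_succ h hk⟩
    · obtain rfl : k = t := by omega
      exact Or.inl (chainVert_last h)
  · rintro (rfl | ⟨i, rfl⟩)
    · exact ⟨t + 1, by omega, chainVert_last h⟩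
    · have hi : (if u < v then i.val else t - 1 - i.val) < t := by split_ifs <;> omega
      refine ⟨_ + 1, by omega, chainVert_succ h hi |>.trans ?_⟩
      split_ifs <;> simp [Fin.ext_iff, Fin.val_rev]; omega

lemma disjoint_support_tail_edgeWalk_iff {d d' : G.Dart} :
    (edgeWalk (t := t) d.adj).support.tail.Disjoint (edgeWalk d'.adj).support.tail ↔
      d.edge ≠ d'.edge ∧ d.snd ≠ d'.snd := by
  constructor
  · intro hdis
    constructor
    · intro he
      have he' : (⟨s(d'.fst, d'.snd), d'.adj⟩ : G.edgeSet) = ⟨s(d.fst, d.snd), d.adj⟩ :=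
        Subtype.ext he.symm
      exact hdis (a := inr (⟨s(d.fst, d.snd), d.adj⟩, ⟨0, NeZero.pos t⟩))
        ((mem_support_tail_edgeWalk _).mpr (Or.inr ⟨_, rfl⟩))
        ((mem_support_tail_edgeWalk _).mpr (Or.inr ⟨_, by rw [he']⟩))
    · intro hs
      exact hdis (a := inl d.snd) ((mem_support_tail_edgeWalk _).mpr (Or.inl rfl))
        ((mem_support_tail_edgeWalk _).mpr (Or.inl (by rw [hs])))
  · rintro ⟨he, hs⟩ x hx hx'
    rw [mem_support_tail_edgeWalk] at hx hx'
    rcases hx with rfl | ⟨i, rfl⟩ <;> rcases hx' with h' | ⟨j, h'⟩ <;>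
      simp_all [Dart.edge, Subtype.ext_iff]

def lift : {a b : V} → G.Walk a b → (Subdivision G t).Walk (inl a) (inl b)
  | _, _, .nil => .nil
  | _, _, .cons h q => (edgeWalk h).append (lift q)

variable {a b : V}

lemma length_lift (q : G.Walk a b) : (lift (t := t) q).length = (t + 1) * q.length := by
  induction q with
  | nil => rfl
  | cons h q ih => rw [lift, Walk.length_append, length_edgeWalk, ih, Walk.length_cons]; ring

lemma support_tail_lift (q : G.Walk a b) :
    (lift (t := t) q).support.tail = q.darts.flatMap fun d => (edgeWalk d.adj).support.tail := by
  induction q with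
  | nil => rfl
  | cons h q ih => rw [lift, Walk.tail_support_append, ih, Walk.darts_cons, List.flatMap_cons]

lemma mem_support_lift {q : G.Walk a b} {x : V ⊕ G.edgeSet × Fin t} :
    x ∈ (lift q).support ↔
      x = inl a ∨ ∃ d ∈ q.darts, x = inl d.snd ∨ ∃ i, x = inr (⟨d.edge, d.edge_mem⟩, i) := by
  rw [← Walk.cons_tail_support, support_tail_lift]
  simp [mem_support_tail_edgeWalk, Dart.edge]

lemma inl_mem_support_lift {q : G.Walk a b} {c : V} (hc : c ∈ q.support) :
    inl c ∈ (lift (t := t) q).support := by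
  rw [← Walk.cons_tail_support, ← Walk.map_snd_darts, List.mem_cons, List.mem_map] at hc
  rcases hc with rfl | ⟨d, hd, rfl⟩
  · exact Walk.start_mem_support _
  · exact mem_support_lift.mpr (Or.inr ⟨d, hd, Or.inl rfl⟩)

lemma proj_mem_support_of_mem_support_lift {q : G.Walk a b} {x : V ⊕ G.edgeSet × Fin t}
    (hx : x ∈ (lift q).support) : proj x ∈ q.support := by
  rcases mem_support_lift.mp hx with rfl | ⟨d, hd, rfl | ⟨i, rfl⟩⟩
  · exact q.start_mem_support
  · exact q.dart_snd_mem_support_of_mem_darts hd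
  · simp only [proj, Sum.elim_inr, Dart.edge, Sym2.inf_mk]
    rcases le_total d.fst d.snd with h | h
    · rw [inf_eq_left.mpr h]
      exact q.dart_fst_mem_support_of_mem_darts hd
    · rw [inf_eq_right.mpr h]
      exact q.dart_snd_mem_support_of_mem_darts hd

lemma nodup_support_tail_lift_iff {q : G.Walk a b} :
    (lift (t := t) q).support.tail.Nodup ↔ q.edges.Nodup ∧ q.support.tail.Nodup := by
  rw [support_tail_lift, List.nodup_flatMap, Walk.edges, ← Walk.map_snd_darts]
  simp only [nodup_support_tail_edgeWalk, implies_true, true_and]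
  simp only [List.Nodup, List.pairwise_map, ← List.pairwise_and_iff]
  exact List.Pairwise.iff fun _ _ => disjoint_support_tail_edgeWalk_iff

lemma isCycle_lift_iff {q : G.Walk a a} : (lift (t := t) q).IsCycle ↔ q.IsCycle := by
  rw [Walk.isCycle_iff_nodup_support_tail, nodup_support_tail_lift_iff, length_lift,
    Walk.isCycle_def, Walk.isTrail_def]
  constructor
  · rintro ⟨⟨he, hs⟩, hlen⟩
    exact ⟨he, by rintro rfl; simp at hlen, hs⟩
  · rintro ⟨he, hne, hs⟩
    have := ((Walk.isCycle_def q).mpr ⟨⟨he⟩, hne, hs⟩).three_le_length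
    exact ⟨⟨he, hs⟩, by nlinarith⟩

/-- Once such a walk enters the path replacing an edge, it must run through it to its other end. -/
theorem exists_eq_lift {u v : V} (w : (Subdivision G t).Walk (inl u) (inl v)) (hw : w.IsTrail)
    (hw' : w.support.tail.Nodup) : ∃ q : G.Walk u v, w = lift q := by
  induction hn : w.length using Nat.strong_induction_on generalizing u w with
  | _ n ih =>
  cases w with
  | nil => exact ⟨.nil, rfl⟩
  | cons hadj w₁ =>
    obtain ⟨v₁, h, rfl⟩ := exists_chainVert_one_eq hadj
    have hw₁ : w₁.IsPath := Walk.IsPath.mk' (by simpa using hw')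
    have hsnd : w₁.snd ≠ chainVert h 0 := by
      intro hs
      have hnil : ¬ w₁.Nil := fun hnil => chainVert_ne_inl h one_pos NeZero.one_le v hnil.eq
      have hdup := hw.edges_nodup
      rw [Walk.edges_cons, List.nodup_cons] at hdup
      have hmem := w₁.mk_start_snd_mem_edges hnil
      rw [hs, Sym2.eq_swap] at hmem
      exact hdup.1 hmem
    obtain ⟨w', rfl⟩ := exists_eq_walkAlong_append (adj_chainVert h) (chainVert_last h)
      (fun k hk0 hk _ hy => chainVert_eq_of_adj h hk0 hk hy)
      (fun k hk0 hk => chainVert_ne_inl h hk0 (Nat.lt_succ_iff.mp hk) v)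
      1 one_pos (Nat.le_add_left 1 t) w₁ hw₁ hsnd
    have hw'path : w'.IsPath := hw₁.of_append_right
    obtain ⟨q, rfl⟩ := ih w'.length
      (by rw [← hn, Walk.length_cons, Walk.length_append, length_walkAlong]; omega)
      w' hw'path.isTrail (hw'path.support_nodup.sublist (List.tail_sublist _)) rfl
    exact ⟨.cons h q, by rw [lift, edgeWalk, walkAlong_of_lt _ _ (Nat.succ_pos t)]; rfl⟩

theorem exists_isCycle_of_isCycle {x : V ⊕ G.edgeSet × Fin t} {c : (Subdivision G t).Walk x x}
    (hc : c.IsCycle) : ∃ (a : V) (q : G.Walk a a), q.IsCycle ∧ c.length = (t + 1) * q.length ∧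
      ∀ b ∈ q.support, inl b ∈ c.support := by
  classical
  obtain ⟨a, ha⟩ := exists_inl_mem_support hc
  have hc' := hc.rotate ha
  obtain ⟨q, hq⟩ := exists_eq_lift _ hc'.isTrail hc'.support_nodup
  refine ⟨a, q, isCycle_lift_iff.mp (hq ▸ hc'), ?_, fun b hb => ?_⟩
  · rw [← Walk.length_rotate c _ ha, hq, length_lift]
  · rw [← Walk.mem_support_rotate_iff c _ ha, hq]
    exact inl_mem_support_lift hb

theorem mul_egirth_le_egirth : (t + 1 : ℕ∞) * G.egirth ≤ (Subdivision G t).egirth := by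
  rw [le_egirth]
  intro x c hc
  obtain ⟨a, q, hq, hlen, -⟩ := exists_isCycle_of_isCycle hc
  rw [hlen]
  push_cast
  gcongr
  exact egirth_le_length hq

lemma isEvenCycleTransversal_image_proj {S : Set (V ⊕ G.edgeSet × Fin t)}
    (hS : IsEvenCycleTransversal (Subdivision G t) S) : IsEvenCycleTransversal G (proj '' S) := by
  intro a q hq heven
  obtain ⟨x, hxS, hx⟩ := hS _ (lift q) (isCycle_lift_iff.mpr hq)
    (by rw [length_lift]; exact heven.mul_left _)
  exact ⟨proj x, ⟨x, hxS, rfl⟩, proj_mem_support_of_mem_support_lift hx⟩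

lemma isEvenCycleTransversal_image_inl (ht : Even t) {S : Set V}
    (hS : IsEvenCycleTransversal G S) : IsEvenCycleTransversal (Subdivision G t) (inl '' S) := by
  intro x c hc heven
  obtain ⟨a, q, hq, hlen, hsupp⟩ := exists_isCycle_of_isCycle hc
  rw [hlen, Nat.even_mul] at heven
  obtain ⟨b, hbS, hb⟩ := hS a q hq (heven.resolve_left (Nat.not_even_iff_odd.mpr ht.add_one))
  exact ⟨inl b, ⟨b, hbS, rfl⟩, hsupp b hb⟩

end Subdivision

theorem subdivision_ect_and_girth_general {V : Type*} [Fintype V] [LinearOrder V]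
    (G : SimpleGraph V) (p : ℕ) (hp : 1 ≤ p) :
    sInf {k : ℕ | ∃ S : Set V, IsEvenCycleTransversal G S ∧ S.ncard = k} =
      sInf {k : ℕ | ∃ S : Set (V ⊕ G.edgeSet × Fin (2 * p)),
        IsEvenCycleTransversal (Subdivision G (2 * p)) S ∧ S.ncard = k} ∧
    (p : ℕ∞) < (Subdivision G (2 * p)).egirth := by
  have : NeZero (2 * p) := ⟨by omega⟩
  refine ⟨le_antisymm ?_ ?_, ?_⟩
  · exact sInf_ncard_le_of_image Subdivision.proj ⟨_, isEvenCycleTransversal_univ _⟩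
      fun _ => Subdivision.isEvenCycleTransversal_image_proj
  · exact sInf_ncard_le_of_image Sum.inl ⟨_, isEvenCycleTransversal_univ _⟩
      fun _ => Subdivision.isEvenCycleTransversal_image_inl (even_two_mul p)
  · calc (p : ℕ∞) < ((2 * p + 1 : ℕ) : ℕ∞) * 3 := by norm_cast; omega
      _ ≤ ((2 * p + 1 : ℕ) : ℕ∞) * G.egirth := by gcongr; exact SimpleGraph.three_le_egirth
      _ ≤ _ := by exact_mod_cast Subdivision.mul_egirth_le_egirth

/-- Subdividing every edge of `G` exactly `2p` times preserves the minimum size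
of an even cycle transversal, and yields a graph of girth greater than `p`
(provided `G` has a cycle). -/
theorem subdivision_ect_and_girth {V : Type*} [Fintype V] [LinearOrder V]
    (G : SimpleGraph V) (p : ℕ) (hp : 1 ≤ p)
    (hcyc : ∃ (v : V) (w : G.Walk v v), w.IsCycle) :
    sInf {k : ℕ | ∃ S : Set V, IsEvenCycleTransversal G S ∧ S.ncard = k} =
      sInf {k : ℕ | ∃ S : Set (V ⊕ G.edgeSet × Fin (2 * p)),
        IsEvenCycleTransversal (Subdivision G (2 * p)) S ∧ S.ncard = k} ∧
    (p : ℕ∞) < (Subdivision G (2 * p)).egirth :=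
  subdivision_ect_and_girth_general G p hp
end

section
/- Let F be a graph each of whose blocks has at most d vertices, and suppose F is sP₃-free. Then the number of cutvertices v of F that have at least two leaf blocks as children in the (rooted) block-cut forest (terminals of type 1) is at most d(s−1). -/
/-- A cutvertex of `G`: a vertex lying in two distinct blocks. -/
def IsCutvertex {V : Type*} (G : SimpleGraph V) (v : V) : Prop :=
  ∃ B₁ B₂ : Set V, IsBlock G B₁ ∧ IsBlock G B₂ ∧ B₁ ≠ B₂ ∧ v ∈ B₁ ∧ v ∈ B₂

/-- A leaf block: a block containing exactly one cutvertex (a leaf of the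
block-cut forest). -/
def IsLeafBlock {V : Type*} (G : SimpleGraph V) (B : Set V) : Prop :=
  IsBlock G B ∧ ∃! w, w ∈ B ∧ IsCutvertex G w

/-- A terminal of type 1: a cutvertex having at least two leaf blocks as
children in the rooted block-cut forest. -/
def TerminalType1 {V : Type*} (G : SimpleGraph V) (v : V) : Prop :=
  IsCutvertex G v ∧ ∃ B₁ B₂ : Set V, B₁ ≠ B₂ ∧ IsLeafBlock G B₁ ∧ IsLeafBlock G B₂ ∧
    v ∈ B₁ ∧ v ∈ B₂

/-- A terminal of type 2: a cutvertex `x` that is the great-grandparent of some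
leaf block in the rooted block-cut forest; equivalently, there are a cutvertex
`w ≠ x`, a block `B'` containing both `x` and `w`, and a leaf block `B ≠ B'`
containing `w`. -/
def TerminalType2 {V : Type*} (G : SimpleGraph V) (x : V) : Prop :=
  IsCutvertex G x ∧ ∃ (w : V) (B B' : Set V), IsCutvertex G w ∧ x ≠ w ∧
    IsBlock G B' ∧ x ∈ B' ∧ w ∈ B' ∧ IsLeafBlock G B ∧ w ∈ B ∧ B ≠ B'

/-- The disjoint union of `s` copies of the path on `r` vertices. -/
def multiPath (s r : ℕ) : SimpleGraph (Fin s × Fin r) where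
  Adj x y := x.1 = y.1 ∧ (SimpleGraph.pathGraph r).Adj x.2 y.2
  symm := ⟨by rintro ⟨a, i⟩ ⟨b, j⟩ ⟨h1, h2⟩; exact ⟨h1.symm, h2.symm⟩⟩
  loopless := ⟨by rintro ⟨a, i⟩ ⟨_, h2⟩; exact (SimpleGraph.pathGraph r).loopless.irrefl i h2⟩

open SimpleGraph

section

variable {V : Type*} {G : SimpleGraph V}

lemma connected_induce_image_Icc {f : ℕ → V} {a b : ℕ} (hab : a ≤ b)
    (hadj : ∀ i, a ≤ i → i < b → G.Adj (f i) (f (i + 1))) :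
    (G.induce (f '' Set.Icc a b)).Connected := by
  induction b, hab using Nat.le_induction with
  | base =>
    rw [Set.Icc_self, Set.image_singleton, induce_singleton_eq_top]
    exact connected_top
  | succ b hab ih =>
    have hsplit : f '' Set.Icc a (b + 1) = f '' Set.Icc a b ∪ {f (b + 1)} := by
      rw [← Set.image_singleton, ← Set.image_union]
      congr 1
      ext i
      simp only [Set.mem_Icc, Set.mem_union, Set.mem_singleton_iff]
      omega
    rw [hsplit]
    exact connected_induce_union (ih fun i hai hib => hadj i hai (by omega)).preconnected
      (by simp) ⟨b, ⟨hab, le_rfl⟩, rfl⟩ rfl (hadj b hab (by omega))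

lemma isBiconnectedSet_cycle {f : ℕ → V} {m : ℕ} (hm : 1 ≤ m) (hinj : Set.InjOn f (Set.Icc 0 m))
    (hadj : ∀ i < m, G.Adj (f i) (f (i + 1))) (hclose : G.Adj (f m) (f 0)) :
    IsBiconnectedSet G (f '' Set.Icc 0 m) := by
  have hseg : ∀ a b, a ≤ b → b ≤ m → (G.induce (f '' Set.Icc a b)).Connected :=
    fun a b hab hbm => connected_induce_image_Icc hab fun i _ hi => hadj i (by omega)
  refine ⟨?_, hseg 0 m (Nat.zero_le _) le_rfl, ?_⟩
  · rw [hinj.ncard_image, Set.ncard_Icc_nat]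
    omega
  rintro _ ⟨j, hj, rfl⟩
  have hdel : f '' Set.Icc 0 m \ {f j} = f '' (Set.Icc 0 m \ {j}) := by
    rw [hinj.image_sdiff, Set.inter_singleton_of_mem hj, Set.image_singleton]
  rw [hdel]
  obtain ⟨-, hjm⟩ := hj
  rcases Nat.eq_zero_or_pos j with rfl | hj0
  · have : Set.Icc 0 m \ {0} = Set.Icc 1 m := by ext i; simp; omega
    exact this ▸ (hseg 1 m hm le_rfl).preconnected
  rcases hjm.eq_or_lt with rfl | hjm
  · have : Set.Icc 0 j \ {j} = Set.Icc 0 (j - 1) := by ext i; simp; omega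
    exact this ▸ (hseg 0 (j - 1) (Nat.zero_le _) (by omega)).preconnected
  have : Set.Icc 0 m \ {j} = Set.Icc (j + 1) m ∪ Set.Icc 0 (j - 1) := by ext i; simp; omega
  rw [this, Set.image_union]
  exact (connected_induce_union (hseg _ _ hjm le_rfl).preconnected
    (hseg 0 (j - 1) (Nat.zero_le _) (by omega)).preconnected ⟨m, ⟨hjm, le_rfl⟩, rfl⟩
    ⟨0, ⟨le_rfl, Nat.zero_le _⟩, rfl⟩ hclose).preconnected

lemma isBiconnectedSet_pair {a b : V} (hab : G.Adj a b) : IsBiconnectedSet G {a, b} := by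
  refine ⟨(Set.ncard_pair hab.ne).ge, induce_pair_connected_of_adj hab, fun v hv => ?_⟩
  have : ({a, b} \ {v} : Set V).Subsingleton := by
    rcases hv with rfl | rfl <;> exact Set.subsingleton_singleton.anti (by intro x; simp; tauto)
  have := this.coe_sort
  exact Preconnected.of_subsingleton

lemma exists_isBlock_superset_s15 [Finite V] {B : Set V} (hB : IsBiconnectedSet G B) :
    ∃ B', IsBlock G B' ∧ B ⊆ B' := by
  obtain ⟨B', hBB', hmax⟩ := (Set.toFinite {C | IsBiconnectedSet G C}).exists_le_maximal hB
  exact ⟨B', ⟨hmax.prop, fun C hC h => h.antisymm (hmax.2 hC h)⟩, hBB'⟩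

lemma exists_isBlock_of_adj [Finite V] {a b : V} (hab : G.Adj a b) :
    ∃ B, IsBlock G B ∧ a ∈ B ∧ b ∈ B := by
  obtain ⟨B, hB, hsub⟩ := exists_isBlock_superset_s15 (isBiconnectedSet_pair hab)
  exact ⟨B, hB, hsub (.inl rfl), hsub (.inr rfl)⟩

lemma IsBiconnectedSet.exists_adj {B : Set V} (hB : IsBiconnectedSet G B) {v : V} (hv : v ∈ B) :
    ∃ u ∈ B, G.Adj v u := by
  have : Nontrivial B :=
    Set.nontrivial_coe_sort.2 (Set.one_lt_ncard_iff_nontrivial_and_finite.1 hB.1).1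
  obtain ⟨u, hu⟩ := hB.2.1.preconnected.exists_adj_of_nontrivial ⟨v, hv⟩
  exact ⟨u, u.2, hu⟩

lemma IsBlock.neighborSet_subset [Finite V] {B : Set V} (hB : IsBlock G B) {v : V} (hv : v ∈ B)
    (hcut : ¬IsCutvertex G v) : G.neighborSet v ⊆ B := by
  intro u hvu
  obtain ⟨B', hB', hvB', huB'⟩ := exists_isBlock_of_adj hvu
  obtain rfl : B = B' := by_contra fun hne => hcut ⟨B, B', hB, hB', hne, hv, hvB'⟩
  exact huB'

lemma IsLeafBlock.eq_of_isCutvertex {B : Set V} (hB : IsLeafBlock G B) {t x : V} (ht : t ∈ B)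
    (htc : IsCutvertex G t) (hx : x ∈ B) (hxc : IsCutvertex G x) : x = t :=
  hB.2.unique ⟨hx, hxc⟩ ⟨ht, htc⟩

lemma IsLeafBlock.exists_adj_not_isCutvertex {B : Set V} (hB : IsLeafBlock G B) {t : V}
    (ht : t ∈ B) (htc : IsCutvertex G t) : ∃ u ∈ B, G.Adj t u ∧ ¬IsCutvertex G u := by
  obtain ⟨u, huB, htu⟩ := hB.1.1.exists_adj ht
  exact ⟨u, huB, htu, fun huc => htu.ne (hB.eq_of_isCutvertex ht htc huB huc).symm⟩

def leafBlockUnion (G : SimpleGraph V) (t : V) : Set V :=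
  {x | ∃ B, IsLeafBlock G B ∧ t ∈ B ∧ x ∈ B}

lemma disjoint_leafBlockUnion {t t' : V} (ht : IsCutvertex G t) (ht' : IsCutvertex G t')
    (htt' : t ≠ t') : Disjoint (leafBlockUnion G t) (leafBlockUnion G t') := by
  refine Set.disjoint_left.2 ?_
  rintro x ⟨B, hB, htB, hxB⟩ ⟨B', hB', htB', hxB'⟩
  have hBB' : B ≠ B' := by
    rintro rfl
    exact htt' (hB.eq_of_isCutvertex htB' ht' htB ht)
  have hx : IsCutvertex G x := ⟨B, B', hB.1, hB'.1, hBB', hxB, hxB'⟩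
  exact htt' ((hB.eq_of_isCutvertex htB ht hxB hx).symm.trans
    (hB'.eq_of_isCutvertex htB' ht' hxB' hx))

lemma exists_pathGraph_three_embedding {a b c : V} (hab : G.Adj a b) (hbc : G.Adj b c)
    (hac : ¬G.Adj a c) (hne : a ≠ c) :
    ∃ φ : pathGraph 3 ↪g G, φ 0 = a ∧ φ 1 = b ∧ φ 2 = c := by
  refine ⟨⟨⟨![a, b, c], ?_⟩, ?_⟩, rfl, rfl, rfl⟩
  · intro i j h
    fin_cases i <;> fin_cases j <;> simp_all [hab.ne, hbc.ne, hab.ne', hbc.ne', hne.symm]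
  · intro i j
    change G.Adj (![a, b, c] i) (![a, b, c] j) ↔ (pathGraph 3).Adj i j
    fin_cases i <;> fin_cases j <;>
      simp [pathGraph_adj, hab, hbc, hab.symm, hbc.symm, hac, G.adj_comm c a]

lemma TerminalType1.exists_pathGraph_embedding [Finite V] {t : V} (ht : TerminalType1 G t) :
    ∃ φ : pathGraph 3 ↪g G, φ 1 = t ∧ (∀ a, φ a ∈ leafBlockUnion G t) ∧
      ∀ a ≠ 1, G.neighborSet (φ a) ⊆ leafBlockUnion G t := by
  obtain ⟨htc, B₁, B₂, hne, hB₁, hB₂, htB₁, htB₂⟩ := ht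
  obtain ⟨u, huB₁, htu, hu⟩ := hB₁.exists_adj_not_isCutvertex htB₁ htc
  obtain ⟨w, hwB₂, htw, hw⟩ := hB₂.exists_adj_not_isCutvertex htB₂ htc
  have huB₂ : u ∉ B₂ := fun h => hu ⟨B₁, B₂, hB₁.1, hB₂.1, hne, huB₁, h⟩
  have hN₁ := hB₁.1.neighborSet_subset huB₁ hu
  have hN₂ := hB₂.1.neighborSet_subset hwB₂ hw
  have hU₁ : B₁ ⊆ leafBlockUnion G t := fun x hx => ⟨B₁, hB₁, htB₁, hx⟩
  have hU₂ : B₂ ⊆ leafBlockUnion G t := fun x hx => ⟨B₂, hB₂, htB₂, hx⟩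
  obtain ⟨φ, h0, h1, h2⟩ := exists_pathGraph_three_embedding htu.symm htw
    (fun h => huB₂ (hN₂ h.symm)) (by rintro rfl; exact huB₂ hwB₂)
  refine ⟨φ, h1, fun a => ?_, fun a ha => ?_⟩ <;> fin_cases a
  · exact h0 ▸ hU₁ huB₁
  · exact h1 ▸ hU₁ htB₁
  · exact h2 ▸ hU₂ hwB₂
  · exact h0 ▸ hN₁.trans hU₁
  · exact absurd rfl ha
  · exact h2 ▸ hN₂.trans hU₂

lemma ne_and_not_adj_of_disjoint {W : Type*} {H : SimpleGraph W} {c : W} {K K' : Set V}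
    (hKK' : Disjoint K K') {φ ψ : H ↪g G} (hφ : ∀ a, φ a ∈ K) (hψ : ∀ b, ψ b ∈ K')
    (hφN : ∀ a ≠ c, G.neighborSet (φ a) ⊆ K) (hψN : ∀ b ≠ c, G.neighborSet (ψ b) ⊆ K')
    (hc : ¬G.Adj (φ c) (ψ c)) (a b : W) : φ a ≠ ψ b ∧ ¬G.Adj (φ a) (ψ b) := by
  refine ⟨hKK'.ne_of_mem (hφ a) (hψ b), fun h => ?_⟩
  by_cases ha : a = c
  · by_cases hb : b = c
    · subst ha hb
      exact hc h
    · exact Set.disjoint_left.1 hKK' (hφ a) (hψN b hb h.symm)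
  · exact Set.disjoint_left.1 hKK' (hφN a ha h) (hψ b)

lemma nonempty_multiPath_embedding {s r : ℕ} (φ : Fin s → (pathGraph r ↪g G))
    (hapart : ∀ i j, i ≠ j → ∀ a b, φ i a ≠ φ j b ∧ ¬G.Adj (φ i a) (φ j b)) :
    Nonempty (multiPath s r ↪g G) := by
  refine ⟨⟨⟨fun x => φ x.1 x.2, ?_⟩, ?_⟩⟩
  · rintro ⟨i, a⟩ ⟨j, b⟩ h
    obtain rfl : i = j := by_contra fun hij => (hapart i j hij a b).1 h
    exact Prod.ext rfl ((φ i).injective h)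
  · rintro ⟨i, a⟩ ⟨j, b⟩
    by_cases hij : i = j
    · subst hij
      exact (φ i).map_adj_iff.trans (and_iff_right rfl).symm
    · exact iff_of_false (hapart i j hij a b).2 fun h => hij h.1

section Paths

variable {S : Set V} {f : ℕ → V} {k : ℕ}

def IsPathIn (G : SimpleGraph V) (S : Set V) (f : ℕ → V) (k : ℕ) : Prop :=
  (∀ i ≤ k, f i ∈ S) ∧ (∀ i < k, G.Adj (f i) (f (i + 1))) ∧ Set.InjOn f (Set.Icc 0 k)

lemma IsPathIn.le_card [Finite V] (hf : IsPathIn G S f k) : k + 1 ≤ Nat.card V := by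
  simpa [hf.2.2.ncard_image] using Set.ncard_le_card (f '' Set.Icc 0 k)

lemma IsPathIn.cons (hf : IsPathIn G S f k) {y : V} (hy : y ∈ S) (hyf : G.Adj y (f 0))
    (hnew : y ∉ f '' Set.Icc 0 k) :
    IsPathIn G S (fun | 0 => y | i + 1 => f i) (k + 1) := by
  refine ⟨?_, ?_, ?_⟩
  · rintro (_ | i) hi
    exacts [hy, hf.1 i (by omega)]
  · rintro (_ | i) hi
    exacts [hyf, hf.2.1 i (by omega)]
  · rintro (_ | i) ⟨-, hi⟩ (_ | j) ⟨-, hj⟩ h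
    · rfl
    · exact absurd ⟨j, ⟨Nat.zero_le _, by omega⟩, h.symm⟩ hnew
    · exact absurd ⟨i, ⟨Nat.zero_le _, by omega⟩, h⟩ hnew
    · exact congrArg (· + 1) (hf.2.2 ⟨Nat.zero_le _, by omega⟩ ⟨Nat.zero_le _, by omega⟩ h)

lemma exists_isPathIn_maximal [Finite V] (hS : S.Nonempty) :
    ∃ f k, IsPathIn G S f k ∧ ∀ g, ¬IsPathIn G S g (k + 1) := by
  classical
  obtain ⟨v, hv⟩ := hS
  have h0 : ∃ f, IsPathIn G S f 0 :=
    ⟨fun _ => v, fun _ _ => hv, fun _ hi => absurd hi (Nat.not_lt_zero _),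
      fun i hi j hj _ => by rw [Set.mem_Icc] at hi hj; omega⟩
  set K := Nat.findGreatest (fun k => ∃ f, IsPathIn G S f k) (Nat.card V)
  obtain ⟨f, hf⟩ := Nat.findGreatest_spec (P := fun k => ∃ f, IsPathIn G S f k) (Nat.zero_le _) h0
  refine ⟨f, K, hf, fun g hg => ?_⟩
  exact Nat.findGreatest_is_greatest (Nat.lt_succ_self K) (by have := hg.le_card; omega) ⟨g, hg⟩

lemma IsPathIn.neighborSet_inter_subset (hf : IsPathIn G S f k)
    (hmax : ∀ g, ¬IsPathIn G S g (k + 1)) : G.neighborSet (f 0) ∩ S ⊆ f '' Set.Icc 1 k := by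
  rintro y ⟨hy0, hyS⟩
  by_contra hy
  refine hmax _ (hf.cons hyS hy0.symm ?_)
  rintro ⟨i, hi, rfl⟩
  rcases Nat.eq_zero_or_pos i with rfl | hpos
  · exact G.loopless.irrefl _ hy0
  · exact hy ⟨i, ⟨hpos, hi.2⟩, rfl⟩

lemma exists_ncard_neighborSet_inter_lt [Finite V] {d : ℕ} (hd : 0 < d)
    (hblocks : ∀ B, IsBlock G B → B.ncard ≤ d) (hS : S.Nonempty) :
    ∃ v ∈ S, (G.neighborSet v ∩ S).ncard < d := by
  classical
  obtain ⟨f, k, hf, hmax⟩ := exists_isPathIn_maximal hS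
  refine ⟨f 0, hf.1 0 (Nat.zero_le _), ?_⟩
  by_contra! hdeg
  set m := Nat.findGreatest (fun i => G.Adj (f 0) (f i)) k
  have hmk : m ≤ k := Nat.findGreatest_le k
  have hN : G.neighborSet (f 0) ∩ S ⊆ f '' Set.Icc 1 m := by
    intro y hy
    obtain ⟨i, hi, rfl⟩ := hf.neighborSet_inter_subset hmax hy
    exact ⟨i, ⟨hi.1, Nat.le_findGreatest hi.2 hy.1⟩, rfl⟩
  have hdm : d ≤ m := calc
    d ≤ (G.neighborSet (f 0) ∩ S).ncard := hdeg
    _ ≤ (f '' Set.Icc 1 m).ncard := Set.ncard_le_ncard hN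
    _ ≤ (Set.Icc 1 m).ncard := Set.ncard_image_le
    _ = m := by simp
  have hclose : G.Adj (f m) (f 0) := by
    obtain ⟨y, hy⟩ := Set.nonempty_of_ncard_ne_zero (s := G.neighborSet (f 0) ∩ S) (by omega)
    obtain ⟨i, hi, rfl⟩ := hf.neighborSet_inter_subset hmax hy
    exact (Nat.findGreatest_spec (P := fun i => G.Adj (f 0) (f i)) hi.2 hy.1).symm
  have hinj : Set.InjOn f (Set.Icc 0 m) := hf.2.2.mono (Set.Icc_subset_Icc_right hmk)
  obtain ⟨B, hB, hCB⟩ := exists_isBlock_superset_s15 <|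
    isBiconnectedSet_cycle (by omega) hinj (fun i hi => hf.2.1 i (by omega)) hclose
  have := (Set.ncard_le_ncard hCB).trans (hblocks B hB)
  rw [hinj.ncard_image, Set.ncard_Icc_nat] at this
  omega

end Paths

lemma exists_isIndepSet_ncard_le_mul_card [Finite V] {d : ℕ} (hd : 0 < d)
    (hblocks : ∀ B, IsBlock G B → B.ncard ≤ d) (S : Set V) :
    ∃ I : Finset V, ↑I ⊆ S ∧ G.IsIndepSet I ∧ S.ncard ≤ d * I.card := by
  classical
  induction hn : S.ncard using Nat.strong_induction_on generalizing S with
  | _ n ih =>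
  rcases S.eq_empty_or_nonempty with rfl | hS
  · exact ⟨∅, by simp, by simp, by simp [← hn]⟩
  obtain ⟨v, hvS, hv⟩ := exists_ncard_neighborSet_inter_lt hd hblocks hS
  set X := insert v (G.neighborSet v ∩ S)
  have hX : X.ncard ≤ d := (Set.ncard_insert_le _ _).trans hv
  have hlt : (S \ X).ncard < n :=
    hn ▸ Set.ncard_lt_ncard (Set.sdiff_ssubset_left_iff.2 ⟨v, hvS, Set.mem_insert _ _⟩)
  obtain ⟨I, hIS, hI, hcard⟩ := ih _ hlt (S \ X) rfl
  have hvI : v ∉ I := fun h => (hIS h).2 (Set.mem_insert _ _)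
  refine ⟨insert v I, ?_, ?_, ?_⟩
  · rw [Finset.coe_insert]
    exact Set.insert_subset hvS (hIS.trans Set.sdiff_subset)
  · have hvI' : ∀ u ∈ I, ¬G.Adj v u := fun u hu hvu =>
      (hIS hu).2 (Set.mem_insert_of_mem _ ⟨hvu, (hIS hu).1⟩)
    rw [Finset.coe_insert, IsIndepSet, Set.pairwise_insert]
    exact ⟨hI, fun u hu _ => ⟨hvI' u hu, fun huv => hvI' u hu huv.symm⟩⟩
  · rw [Finset.card_insert_of_notMem hvI, mul_add, mul_one, ← hn]
    linarith [Set.ncard_le_ncard_sdiff_add_ncard S X]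

end

theorem type1_terminals_bound_general {V : Type*} [Fintype V] (F : SimpleGraph V) (d s : ℕ)
    (hblocks : ∀ B : Set V, IsBlock F B → B.ncard ≤ d)
    (hfree : ¬ Nonempty (multiPath s 3 ↪g F)) :
    {v : V | TerminalType1 F v}.ncard ≤ d * (s - 1) := by
  set T := {v : V | TerminalType1 F v}
  by_contra! hlarge
  obtain ⟨_, -, B, -, -, hB, -⟩ := Set.nonempty_of_ncard_ne_zero (s := T) (by omega)
  have hd : 0 < d := by linarith [hB.1.1.1, hblocks B hB.1]
  obtain ⟨I, hIT, hI, hcard⟩ := exists_isIndepSet_ncard_le_mul_card hd hblocks T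
  have hsI : s ≤ I.card := by
    by_contra! h
    linarith [Nat.mul_le_mul_left d (show I.card ≤ s - 1 by omega)]
  obtain ⟨e⟩ := Function.Embedding.nonempty_of_card_le (α := Fin s) (β := I) (by simpa using hsI)
  have ht : ∀ i, TerminalType1 F (e i) := fun i => hIT (e i).2
  choose φ hφt hφU hφN using fun i => (ht i).exists_pathGraph_embedding
  refine hfree (nonempty_multiPath_embedding φ fun i j hij => ?_)
  have hne : (e i : V) ≠ e j := fun h => hij (e.injective (Subtype.ext h))
  refine ne_and_not_adj_of_disjoint (disjoint_leafBlockUnion (ht i).1 (ht j).1 hne)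
    (hφU i) (hφU j) (hφN i) (hφN j) ?_
  rw [hφt, hφt]
  exact hI (e i).2 (e j).2 hne

/-- In an `sP₃`-free graph whose blocks have at most `d` vertices, there are at
most `d(s-1)` terminals of type 1. -/
theorem type1_terminals_bound {V : Type*} [Fintype V] (F : SimpleGraph V) (d s : ℕ)
    (hs : 1 ≤ s) (hblocks : ∀ B : Set V, IsBlock F B → B.ncard ≤ d)
    (hfree : ¬ Nonempty (multiPath s 3 ↪g F)) :
    {v : V | TerminalType1 F v}.ncard ≤ d * (s - 1) :=
  type1_terminals_bound_general F d s hblocks hfree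
end
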